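/- arXiv:1102.3722 — 4 statements merged into one kernel-verified Lean document; each statement's English description precedes it below -/
import Mathlib

section
/- Let d ≥ 3 and L ≥ 0 be integers, let α be a real number, and define the sequence x_n = (d−1)^{−n/2}·sin((L+1−n)·α) for integers n. Then x_{L+1} = 0, and for every integer n the recurrence x_n − (1/d)·x_{n−1} − ((d−1)/d)·x_{n+1} = λ·x_n holds with λ = 1 − (2/d)·√(d−1)·cos α. -/
/-!
Writing `θ = (L + 1 - n) α`, the neighbours of `x n` carry the phases `θ ± α` and the extra
weights `(d-1)^{±1/2}`. The transition probabilities `1/d` and `(d-1)/d` are exactly what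
balances these weights, so that both neighbours enter with the common factor `√(d-1)/d`, and
`sin (θ + α) + sin (θ - α) = 2 sin θ cos α` turns their sum into a multiple of `x n`.
-/

open Real

theorem rpow_neg_half_sub_one {r : ℝ} (hr : 0 < r) (t : ℝ) :
    r ^ (-(t - 1) / 2) = r ^ (-t / 2) * √r := by
  rw [sqrt_eq_rpow, ← rpow_add hr]
  ring_nf

theorem mul_rpow_neg_half_add_one {r : ℝ} (hr : 0 < r) (t : ℝ) :
    r * r ^ (-(t + 1) / 2) = r ^ (-t / 2) * √r := by
  rw [sqrt_eq_rpow, ← rpow_add hr]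
  nth_rewrite 1 [← rpow_one r]
  rw [← rpow_add hr]
  ring_nf

theorem rpow_neg_half_mul_sin_recurrence {r : ℝ} (hr : 0 < r) (c α t : ℝ) :
    r ^ (-(t - 1) / 2) * sin ((c - (t - 1)) * α)
        + r * (r ^ (-(t + 1) / 2) * sin ((c - (t + 1)) * α))
      = 2 * √r * cos α * (r ^ (-t / 2) * sin ((c - t) * α)) := by
  have hsum :
      sin ((c - (t - 1)) * α) + sin ((c - (t + 1)) * α) = 2 * sin ((c - t) * α) * cos α := by
    rw [two_mul_sin_mul_cos]; ring_nf
  rw [← mul_assoc, rpow_neg_half_sub_one hr, mul_rpow_neg_half_add_one hr]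
  linear_combination r ^ (-t / 2) * √r * hsum

/-- For integers `d ≥ 3`, `L ≥ 0`, a real `α`, the sequence
`x n = (d−1)^{−n/2}·sin((L+1−n)·α)` (indexed by `n : ℤ`) satisfies the
Dirichlet boundary condition `x (L+1) = 0` and the recurrence
`x n − (1/d)·x (n−1) − ((d−1)/d)·x (n+1) = λ·x n` with
`λ = 1 − (2/d)·√(d−1)·cos α`. -/
theorem azimuthal_sequence_satisfies_recurrence (d L : ℕ) (hd : 3 ≤ d) (α : ℝ) :
    let x : ℤ → ℝ := fun n =>
      ((d : ℝ) - 1) ^ (-(n : ℝ) / 2) * Real.sin (((L : ℝ) + 1 - (n : ℝ)) * α)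
    x ((L : ℤ) + 1) = 0 ∧
    ∀ n : ℤ, x n - (1 / (d : ℝ)) * x (n - 1) - (((d : ℝ) - 1) / (d : ℝ)) * x (n + 1)
      = (1 - (2 / (d : ℝ)) * Real.sqrt ((d : ℝ) - 1) * Real.cos α) * x n := by
  have hd' : (3 : ℝ) ≤ d := by exact_mod_cast hd
  refine ⟨by simp, fun n => ?_⟩
  have hrec := rpow_neg_half_mul_sin_recurrence (by linarith : (0 : ℝ) < d - 1) (L + 1) α n
  simp only [Int.cast_sub, Int.cast_add, Int.cast_one]
  linear_combination (-1 / (d : ℝ)) * hrec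
end

section
/- For integers d ≥ 3 and L ≥ 0, the equation d·sin α·cos((L+1)·α) + (d−2)·cos α·sin((L+1)·α) = 0 has exactly L+1 solutions α in the open interval (0, π). -/
open Polynomial Real Set

/-!
By the addition formulas the left-hand side equals `(d - 1) sin((L + 2)α) - sin(Lα)`, which is
`sin α · Q(cos α)` for the polynomial `Q = (d - 1) U_{L+1} - U_{L-1}` of degree `L + 1`, with `U_k`
the Chebyshev polynomials of the second kind. As `sin α > 0` and `cos` is injective on `(0, π)`, there
are at most `L + 1` solutions. Conversely, at the `L + 2` points `αⱼ = (2j + 1)π / (2(L + 2))` we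
have `sin((L + 2)αⱼ) = (-1)ʲ`, and since `d - 1 > 1` this term dominates: the function alternates
in sign, and the intermediate value theorem gives a zero between consecutive points.
-/

lemma encard_setOf_eval_comp_eq_zero_le {α R : Type*} [CommRing R] [IsDomain R] {s : Set α}
    {f : α → R} (hf : InjOn f s) {p : R[X]} (hp : p ≠ 0) :
    {x ∈ s | p.eval (f x) = 0}.encard ≤ p.natDegree := by
  classical
  have hmaps : MapsTo f {x ∈ s | p.eval (f x) = 0} (p.roots.toFinset : Set R) := fun x hx ↦ by
    simpa [hp] using hx.2
  calc {x ∈ s | p.eval (f x) = 0}.encard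
      ≤ (p.roots.toFinset : Set R).encard := encard_le_encard_of_injOn hmaps (hf.mono (sep_subset _ _))
    _ ≤ p.natDegree := by
      rw [encard_coe_eq_coe_finsetCard]
      exact_mod_cast (Multiset.toFinset_card_le _).trans (card_roots' p)

lemma exists_mem_Ioo_eq_zero_of_neg_one_pow_mul_pos {g : ℝ → ℝ} (hg : Continuous g) {x y : ℝ}
    (hxy : x ≤ y) {j : ℕ} (hx : 0 < (-1) ^ j * g x) (hy : 0 < (-1) ^ (j + 1) * g y) :
    ∃ z ∈ Ioo x y, g z = 0 := by
  have hy' : (-1) ^ j * g y < 0 := by rw [pow_succ] at hy; linarith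
  obtain ⟨z, hz, hgz⟩ :=
    intermediate_value_Ioo' hxy (continuous_const.mul hg).continuousOn ⟨hy', hx⟩
  exact ⟨z, hz, by simpa using hgz⟩

lemma le_encard_setOf_eq_zero_of_alternating {g : ℝ → ℝ} (hg : Continuous g) {a : ℕ → ℝ}
    (ha : StrictMono a) {n : ℕ} (hsign : ∀ j ≤ n, 0 < (-1) ^ j * g (a j)) :
    (n : ℕ∞) ≤ {x ∈ Ioo (a 0) (a n) | g x = 0}.encard := by
  have hzero (j : Fin n) : ∃ x ∈ Ioo (a j) (a (j + 1)), g x = 0 :=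
    exists_mem_Ioo_eq_zero_of_neg_one_pow_mul_pos hg (ha (Nat.lt_succ_self j)).le
      (hsign j j.is_lt.le) (hsign (j + 1) j.is_lt)
  choose β hβ hβzero using hzero
  have hβmono : StrictMono β := fun i j hij ↦
    calc β i < a (i + 1) := (hβ i).2
      _ ≤ a j := ha.monotone hij
      _ < β j := (hβ j).1
  have hmaps : MapsTo β univ {x ∈ Ioo (a 0) (a n) | g x = 0} := fun j _ ↦
    ⟨⟨(ha.monotone (Nat.zero_le j)).trans_lt (hβ j).1,
      (hβ j).2.trans_le (ha.monotone j.is_lt)⟩, hβzero j⟩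
  simpa using encard_le_encard_of_injOn hmaps hβmono.injective.injOn

lemma natDegree_C_mul_U_sub_U {R : Type*} [CommRing R] [IsDomain R] [NeZero (2 : R)] {c : R}
    (hc : c ≠ 0) (n : ℕ) :
    (C c * Chebyshev.U R ((n : ℤ) + 1) - Chebyshev.U R ((n : ℤ) - 1)).natDegree = n + 1 := by
  have hlead : (C c * Chebyshev.U R ((n : ℤ) + 1)).natDegree = n + 1 := by
    rw [natDegree_C_mul hc]; exact_mod_cast Chebyshev.natDegree_U_natCast R (n + 1)
  rw [natDegree_sub_eq_left_of_natDegree_lt, hlead]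
  rw [hlead, Chebyshev.natDegree_U]
  omega

lemma eval_C_mul_U_sub_U_cos_mul_sin (c : ℝ) (n : ℤ) (α : ℝ) :
    (C c * Chebyshev.U ℝ (n + 1) - Chebyshev.U ℝ (n - 1)).eval (cos α) * sin α
      = c * sin ((n + 2) * α) - sin (n * α) := by
  have h₁ := Chebyshev.U_real_cos α (n + 1)
  have h₂ := Chebyshev.U_real_cos α (n - 1)
  push_cast at h₁ h₂
  rw [eval_sub, eval_mul, eval_C, sub_mul, mul_assoc, h₁, h₂]
  ring_nf

lemma mul_sin_mul_cos_add_mul_cos_mul_sin (c x α : ℝ) :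
    c * sin α * cos ((x + 1) * α) + (c - 2) * cos α * sin ((x + 1) * α)
      = (c - 1) * sin ((x + 2) * α) - sin (x * α) := by
  have h₁ : (x + 2) * α = (x + 1) * α + α := by ring
  have h₂ : x * α = (x + 1) * α - α := by ring
  rw [h₁, h₂, sin_add, sin_sub]
  ring

lemma sin_two_mul_add_one_mul_pi_div_two (j : ℕ) : sin ((2 * j + 1) * π / 2) = (-1) ^ j := by
  rw [show (2 * j + 1) * π / 2 = j * π + π / 2 by ring, sin_add_pi_div_two, cos_nat_mul_pi]

lemma encard_setOf_sub_sin_eq_zero_le {c : ℝ} (hc : c ≠ 0) (n : ℕ) :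
    {α ∈ Ioo 0 π | c * sin ((n + 2) * α) - sin (n * α) = 0}.encard ≤ (n + 1 : ℕ) := by
  set Q := C c * Chebyshev.U ℝ ((n : ℤ) + 1) - Chebyshev.U ℝ ((n : ℤ) - 1)
  have hQ : Q.natDegree = n + 1 := natDegree_C_mul_U_sub_U hc n
  have hset : {α ∈ Ioo 0 π | c * sin ((n + 2) * α) - sin (n * α) = 0}
      = {α ∈ Ioo 0 π | Q.eval (cos α) = 0} := by
    ext α
    refine and_congr_right fun hα ↦ ?_
    have := eval_C_mul_U_sub_U_cos_mul_sin c n α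
    push_cast at this
    rw [← this, mul_eq_zero, or_iff_left (sin_pos_of_pos_of_lt_pi hα.1 hα.2).ne']
  rw [hset, ← hQ]
  exact encard_setOf_eval_comp_eq_zero_le (injOn_cos.mono Ioo_subset_Icc_self)
    (ne_zero_of_natDegree_gt (n := n) (by omega))

lemma le_encard_setOf_sub_sin_eq_zero {c : ℝ} (hc : 1 < c) (n : ℕ) :
    ((n + 1 : ℕ) : ℕ∞) ≤ {α ∈ Ioo 0 π | c * sin ((n + 2) * α) - sin (n * α) = 0}.encard := by
  set a : ℕ → ℝ := fun j ↦ (2 * j + 1) * π / (2 * (n + 2))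
  have ha : StrictMono a := fun i j hij ↦ by
    have : (i : ℝ) < j := by exact_mod_cast hij
    simp only [a]
    gcongr
  have hsign (j : ℕ) : 0 < (-1) ^ j * (c * sin ((n + 2) * a j) - sin (n * a j)) := by
    have harg : (n + 2) * a j = (2 * j + 1) * π / 2 := by simp only [a]; field_simp
    rw [harg, sin_two_mul_add_one_mul_pi_div_two]
    rcases neg_one_pow_eq_or ℝ j with h | h <;> rw [h] <;>
      linarith [neg_one_le_sin (n * a j), sin_le_one (n * a j)]
  have hsub : Ioo (a 0) (a (n + 1)) ⊆ Ioo 0 π := by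
    refine Ioo_subset_Ioo (by positivity) ?_
    simp only [a]
    rw [div_le_iff₀ (by positivity)]
    push_cast
    nlinarith [pi_pos]
  refine (le_encard_setOf_eq_zero_of_alternating (g := fun α ↦ c * sin ((n + 2) * α) - sin (n * α))
    (by fun_prop) ha fun j _ ↦ hsign j).trans ?_
  exact encard_le_encard fun α hα ↦ ⟨hsub hα.1, hα.2⟩

/-- For integers `d ≥ 3` and `L ≥ 0`, the equation
`d·sin α·cos((L+1)α) + (d−2)·cos α·sin((L+1)α) = 0` has exactly `L+1`
solutions `α` in the open interval `(0, π)`. -/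
theorem eigenvalue_condition_solution_count (d L : ℕ) (hd : 3 ≤ d) :
    {α : ℝ | α ∈ Set.Ioo 0 Real.pi ∧
      (d : ℝ) * Real.sin α * Real.cos (((L : ℝ) + 1) * α)
        + ((d : ℝ) - 2) * Real.cos α * Real.sin (((L : ℝ) + 1) * α) = 0}.ncard
      = L + 1 := by
  have hc : (1 : ℝ) < d - 1 := by
    have : (3 : ℝ) ≤ d := by exact_mod_cast hd
    linarith
  simp only [mul_sin_mul_cos_add_mul_cos_mul_sin]
  rw [ncard_def, le_antisymm (encard_setOf_sub_sin_eq_zero_le (by linarith) L)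
    (le_encard_setOf_sub_sin_eq_zero hc L)]
  rfl
end

section
/- Let d ≥ 3 and L ≥ 0 be integers and let α ∈ (0, π) satisfy d·sin α·cos((L+1)·α) + (d−2)·cos α·sin((L+1)·α) = 0. Define the vector v on the interior vertices of the finite d-regular tree of depth L+1 by v(u) = (d−1)^{−n/2}·sin((L+1−n)·α) for every vertex u at depth n (0 ≤ n ≤ L). Then v ≠ 0 and 𝓛_D v = λ·v with λ = 1 − (2/d)·√(d−1)·cos α. -/
/-!
A vector `v u = f (depth u)` is an eigenvector of `𝓛_D` as soon as `f` solves the three-term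
recurrence coming from the tree: a vertex at depth `n ≥ 1` has one parent and `d - 1` children,
the root has `d` children, and the leaves contribute the boundary value `f (L + 1) = 0`.
For `f n = (d-1)^(-n/2) sin((L+1-n)α)` the interior recurrence
`(d-1) f(n+1) + f(n-1) = 2√(d-1) cos α f(n)` is the sum formula
`sin(β-α) + sin(β+α) = 2 sin β cos α`, the boundary value is `sin 0 = 0`, and the equation at
the root `d f(1) = 2√(d-1) cos α f(0)` is exactly the condition imposed on `α`. The vector is
nonzero since `f L = (d-1)^(-L/2) sin α`.
-/

open scoped Classical

/-- Vertices of the finite (truncated) `d`-regular tree whose leaves are at depth `R`: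
a vertex at depth `n ≤ R` is encoded by its depth together with its path from the root,
with an entry in `Fin d` at step `0` (the root has `d` children) and entries `< d − 1`
at steps `1, …, n−1` (each deeper non-leaf vertex has `d − 1` children, hence degree `d`);
entries at steps `≥ n` are padded by `0`. -/
abbrev TreeVertex (d R : ℕ) : Type :=
  { p : Fin (R + 1) × (Fin R → Fin d) //
      (∀ i : Fin R, p.1.1 ≤ i.1 → (p.2 i : ℕ) = 0) ∧
      (∀ i : Fin R, 0 < i.1 → i.1 < p.1.1 → (p.2 i : ℕ) < d - 1) }

namespace TreeVertex

/-- The depth of a vertex. -/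
def depth {d R : ℕ} (v : TreeVertex d R) : ℕ := v.1.1.1

/-- `ChildOf u v` means `v` is a child of `u`. -/
def ChildOf {d R : ℕ} (u v : TreeVertex d R) : Prop :=
  v.depth = u.depth + 1 ∧ ∀ i : Fin R, i.1 < u.depth → v.1.2 i = u.1.2 i

/-- `Desc u v` means `v` is a descendant of `u` (including `u` itself). -/
def Desc {d R : ℕ} (u v : TreeVertex d R) : Prop :=
  u.depth ≤ v.depth ∧ ∀ i : Fin R, i.1 < u.depth → v.1.2 i = u.1.2 i

/-- The root of the tree (for `d > 0`). -/
def root (d R : ℕ) (hd : 0 < d) : TreeVertex d R :=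
  ⟨(0, fun _ => ⟨0, hd⟩), fun _ _ => rfl, fun i _ h => absurd h (by simp)⟩

/-- Two vertices are adjacent iff one is a child of the other. -/
def Adj {d R : ℕ} (u v : TreeVertex d R) : Prop := ChildOf u v ∨ ChildOf v u

/-- The interior vertices: those of depth `< R`, i.e. the non-leaves. -/
abbrev Interior (d R : ℕ) : Type := { v : TreeVertex d R // v.depth < R }

end TreeVertex

open TreeVertex

/-- The Dirichlet Laplacian `𝓛_D` of the finite `d`-regular tree of depth `L+1`:
the normalized Laplacian (every interior vertex has degree `d`) restricted to the rows
and columns of the interior vertices, i.e. with the leaves (depth `L+1`) deleted: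
diagonal entries `1` and entry `−1/d` between adjacent interior vertices. -/
noncomputable def dirichletLaplacian (d L : ℕ) :
    Matrix (Interior d (L + 1)) (Interior d (L + 1)) ℝ := fun u v =>
  if u = v then 1 else if Adj u.1 v.1 then -(1 / (d : ℝ)) else 0

namespace TreeVertex

variable {d R : ℕ}

open Finset

lemma ext_of_depth_eq {u w : TreeVertex d R} (hdepth : u.depth = w.depth)
    (hpath : ∀ i : Fin R, i.1 < u.depth → u.1.2 i = w.1.2 i) : u = w := by
  refine Subtype.ext (Prod.ext (Fin.ext hdepth) (funext fun i => ?_))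
  by_cases hi : i.1 < u.depth
  · exact hpath i hi
  · rw [not_lt] at hi
    exact Fin.ext ((u.2.1 i hi).trans (w.2.1 i (show w.depth ≤ i.1 by omega)).symm)

lemma exists_childOf_entry_eq {u : TreeVertex d R} (hu : u.depth < R) (j : Fin d)
    (hj : u.depth = 0 ∨ (j : ℕ) < d - 1) :
    ∃ w : TreeVertex d R, ChildOf u w ∧ w.1.2 ⟨u.depth, hu⟩ = j := by
  let k : Fin R := ⟨u.depth, hu⟩
  refine ⟨⟨(⟨u.depth + 1, by omega⟩, Function.update u.1.2 k j), fun i hi => ?_,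
    fun i hi0 hi => ?_⟩, ⟨rfl, fun i hi => ?_⟩, Function.update_self ..⟩
  all_goals
    simp only [depth, Function.update_apply, Fin.ext_iff, k] at *
  all_goals split_ifs <;>
    first | omega | rfl | exact u.2.1 i (by omega) | exact u.2.2 i hi0 (by omega)

lemma exists_childOf_of_pos {u : TreeVertex d R} (hu : 0 < u.depth) :
    ∃ w : TreeVertex d R, ChildOf w u := by
  have hR : u.depth - 1 < R := by have := u.1.1.isLt; simp only [depth] at *; omega
  let k : Fin R := ⟨u.depth - 1, hR⟩
  refine ⟨⟨(⟨u.depth - 1, Nat.lt_succ_of_lt hR⟩,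
      Function.update u.1.2 k ⟨0, (u.1.2 k).pos⟩), fun i hi => ?_, fun i hi0 hi => ?_⟩,
    ⟨(Nat.sub_add_cancel hu).symm, fun i hi => ?_⟩⟩
  all_goals
    simp only [depth, Function.update_apply, Fin.ext_iff, k] at *
  all_goals split_ifs <;>
    first | omega | rfl | exact u.2.1 i (by omega) | exact u.2.2 i hi0 (by omega)

lemma not_childOf_self (u : TreeVertex d R) : ¬ ChildOf u u := fun h => by
  have := h.1; omega

lemma ChildOf.not_childOf {u w : TreeVertex d R} (h : ChildOf u w) : ¬ ChildOf w u :=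
  fun h' => by have := h.1; have := h'.1; omega

lemma ChildOf.parent_unique {u w₁ w₂ : TreeVertex d R} (h₁ : ChildOf w₁ u)
    (h₂ : ChildOf w₂ u) : w₁ = w₂ := by
  have hdepth : w₁.depth = w₂.depth := by have := h₁.1; have := h₂.1; omega
  exact ext_of_depth_eq hdepth fun i hi => (h₁.2 i hi).symm.trans (h₂.2 i (hdepth ▸ hi))

lemma ChildOf.eq_of_entry_eq {u w₁ w₂ : TreeVertex d R} (hu : u.depth < R)
    (h₁ : ChildOf u w₁) (h₂ : ChildOf u w₂)
    (he : w₁.1.2 ⟨u.depth, hu⟩ = w₂.1.2 ⟨u.depth, hu⟩) : w₁ = w₂ := by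
  refine ext_of_depth_eq (h₁.1.trans h₂.1.symm) fun i hi => ?_
  rcases Nat.lt_or_eq_of_le (Nat.lt_succ_iff.mp (h₁.1 ▸ hi)) with hlt | heq
  · rw [h₁.2 i hlt, h₂.2 i hlt]
  · rwa [show i = ⟨u.depth, hu⟩ from Fin.ext heq]

lemma ChildOf.entry_lt {u w : TreeVertex d R} (hu : u.depth < R) (h : ChildOf u w)
    (h0 : 0 < u.depth) : (w.1.2 ⟨u.depth, hu⟩ : ℕ) < d - 1 :=
  w.2.2 ⟨u.depth, hu⟩ h0 (show u.depth < w.depth by rw [h.1]; omega)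

lemma exists_depth_eq (hd : 2 ≤ d) {n : ℕ} (hn : n ≤ R) :
    ∃ u : TreeVertex d R, u.depth = n :=
  ⟨⟨(⟨n, by omega⟩, fun _ => ⟨0, by omega⟩), fun _ _ => rfl,
    fun _ _ _ => show 0 < d - 1 by omega⟩, rfl⟩

def childCount (d n : ℕ) : ℕ := if n = 0 then d else d - 1

lemma card_interior_childOf (u : TreeVertex d R) (hu : u.depth + 1 < R) :
    #{w : Interior d R | ChildOf u w.1} = childCount d u.depth := by
  have hu' : u.depth < R := by omega
  calc #{w : Interior d R | ChildOf u w.1}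
      = #{j : Fin d | u.depth = 0 ∨ (j : ℕ) < d - 1} := by
        refine card_bij (fun w _ => w.1.1.2 ⟨u.depth, hu'⟩) (fun w hw => ?_)
          (fun w₁ hw₁ w₂ hw₂ he => ?_) (fun j hj => ?_)
        · simp only [mem_filter, mem_univ, true_and] at hw ⊢
          exact (Nat.eq_zero_or_pos u.depth).imp_right (hw.entry_lt hu')
        · simp only [mem_filter, mem_univ, true_and] at hw₁ hw₂
          exact Subtype.ext (hw₁.eq_of_entry_eq hu' hw₂ he)
        · simp only [mem_filter, mem_univ, true_and] at hj
          obtain ⟨w, hw, rfl⟩ := exists_childOf_entry_eq hu' j hj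
          exact ⟨⟨w, by rw [hw.1]; exact hu⟩, by simpa using hw, rfl⟩
    _ = childCount d u.depth := by
        unfold childCount
        split_ifs with h
        · simp [h]
        · simp [h, Fin.card_filter_val_lt]

/-- `f R = 0` is the Dirichlet condition: just above the leaves, where `u` has no interior
children, both sides vanish. -/
lemma sum_interior_childOf_radial (f : ℕ → ℝ) (hf : f R = 0) (u : Interior d R) :
    ∑ w ∈ {w : Interior d R | ChildOf u.1 w.1}, f w.1.depth
      = childCount d u.1.depth * f (u.1.depth + 1) := by
  rw [sum_congr rfl fun w hw => by rw [(mem_filter.mp hw).2.1], sum_const, nsmul_eq_mul]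
  rcases Nat.lt_or_eq_of_le (show u.1.depth + 1 ≤ R from u.2) with h | h
  · rw [card_interior_childOf u.1 h]
  · rw [h, hf, mul_zero, mul_zero]

lemma sum_interior_parent_radial (f : ℕ → ℝ) (u : Interior d R) :
    ∑ w ∈ {w : Interior d R | ChildOf w.1 u.1}, f w.1.depth
      = if u.1.depth = 0 then 0 else f (u.1.depth - 1) := by
  split_ifs with h
  · refine sum_eq_zero fun w hw => ?_
    have := (mem_filter.mp hw).2.1
    omega
  · obtain ⟨p, hp⟩ := exists_childOf_of_pos (Nat.pos_of_ne_zero h)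
    have hp' : p.depth < R := by have := hp.1; have := u.2; omega
    have hparents : ({w : Interior d R | ChildOf w.1 u.1} : Finset _) = {⟨p, hp'⟩} :=
      eq_singleton_iff_unique_mem.mpr ⟨by simpa using hp,
        fun w hw => Subtype.ext ((mem_filter.mp hw).2.parent_unique hp)⟩
    rw [hparents, sum_singleton, show p.depth = u.1.depth - 1 by have := hp.1; omega]

end TreeVertex

open Finset in
lemma dirichletLaplacian_mulVec_apply (d L : ℕ) (v : Interior d (L + 1) → ℝ)
    (u : Interior d (L + 1)) :
    (dirichletLaplacian d L).mulVec v u = v u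
      - (∑ w ∈ {w | ChildOf u.1 w.1}, v w + ∑ w ∈ {w | ChildOf w.1 u.1}, v w) / d := by
  have hentry : ∀ w, dirichletLaplacian d L u w * v w = (if u = w then v w else 0)
      - ((if ChildOf u.1 w.1 then v w else 0) + (if ChildOf w.1 u.1 then v w else 0)) / d := by
    intro w
    by_cases huw : u = w
    · subst huw
      simp [dirichletLaplacian, not_childOf_self]
    by_cases hc : ChildOf u.1 w.1
    · simp only [dirichletLaplacian, Adj, if_neg huw, hc, hc.not_childOf, true_or, if_true,
        if_false]
      ring
    · by_cases hp : ChildOf w.1 u.1 <;>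
        simp only [dirichletLaplacian, Adj, if_neg huw, hc, hp, or_true, or_false, if_true,
          if_false] <;> ring
  rw [Matrix.mulVec, dotProduct, sum_congr rfl fun w _ => hentry w, sum_sub_distrib,
    sum_ite_eq, if_pos (mem_univ _), ← sum_div, sum_add_distrib, ← sum_filter, ← sum_filter]

lemma dirichletLaplacian_mulVec_radial {d L : ℕ} (f : ℕ → ℝ) (hf : f (L + 1) = 0)
    (u : Interior d (L + 1)) :
    (dirichletLaplacian d L).mulVec (fun w => f w.1.depth) u = f u.1.depth
      - (childCount d u.1.depth * f (u.1.depth + 1)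
        + if u.1.depth = 0 then 0 else f (u.1.depth - 1)) / d := by
  rw [dirichletLaplacian_mulVec_apply, sum_interior_childOf_radial f hf,
    sum_interior_parent_radial]

theorem dirichletLaplacian_mulVec_radial_eq_smul {d L : ℕ} (hd : 0 < d) (f : ℕ → ℝ)
    (μ : ℝ) (hleaf : f (L + 1) = 0) (hroot : d * f 1 = μ * f 0)
    (hrec : ∀ n, 0 < n → n ≤ L → (d - 1) * f (n + 1) + f (n - 1) = μ * f n) :
    (dirichletLaplacian d L).mulVec (fun w => f w.1.depth)
      = (1 - μ / d) • fun w => f w.1.depth := by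
  have hd' : (d : ℝ) ≠ 0 := by positivity
  funext u
  rw [dirichletLaplacian_mulVec_radial f hleaf, Pi.smul_apply, smul_eq_mul, childCount]
  rcases Nat.eq_zero_or_pos u.1.depth with h | h
  · rw [if_pos h, if_pos h, h, hroot]
    field_simp
    ring
  · rw [if_neg h.ne', if_neg h.ne', Nat.cast_sub hd, Nat.cast_one,
      hrec _ h (Nat.lt_succ_iff.mp u.2)]
    field_simp

lemma rpow_neg_add_one_half_mul_sqrt {c : ℝ} (hc : 0 < c) (t : ℝ) :
    c ^ (-(t + 1) / 2) * √c = c ^ (-t / 2) := by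
  rw [Real.sqrt_eq_rpow, ← Real.rpow_add hc]
  ring_nf

section AzimuthalProfile

variable {c α : ℝ} {L : ℕ}

noncomputable def azimuthalProfile (c α : ℝ) (L n : ℕ) : ℝ :=
  c ^ (-(n : ℝ) / 2) * Real.sin (((L : ℝ) + 1 - n) * α)

lemma azimuthalProfile_leaf : azimuthalProfile c α L (L + 1) = 0 := by
  simp [azimuthalProfile]

lemma azimuthalProfile_last_ne_zero (hc : 0 < c) (hα : Real.sin α ≠ 0) :
    azimuthalProfile c α L L ≠ 0 := by
  simp only [azimuthalProfile, add_sub_cancel_left, one_mul]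
  exact mul_ne_zero (Real.rpow_pos_of_pos hc _).ne' hα

lemma azimuthalProfile_recurrence (hc : 0 < c) {n : ℕ} (hn : 0 < n) :
    c * azimuthalProfile c α L (n + 1) + azimuthalProfile c α L (n - 1)
      = 2 * √c * Real.cos α * azimuthalProfile c α L n := by
  set β := ((L : ℝ) + 1 - n) * α
  have hs : √c * √c = c := Real.mul_self_sqrt hc.le
  have hsucc := rpow_neg_add_one_half_mul_sqrt hc n
  have hpred := rpow_neg_add_one_half_mul_sqrt hc ((n - 1 : ℕ) : ℝ)
  simp only [azimuthalProfile]
  push_cast [Nat.cast_sub hn] at hpred ⊢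
  rw [sub_add_cancel] at hpred
  rw [← hpred, ← hsucc, show ((L : ℝ) + 1 - (n + 1)) * α = β - α by ring,
    show ((L : ℝ) + 1 - (n - 1)) * α = β + α by ring, Real.sin_sub, Real.sin_add]
  linear_combination c ^ (-((n : ℝ) + 1) / 2)
    * (Real.sin β * Real.cos α + Real.cos β * Real.sin α - 2 * Real.cos α * Real.sin β) * hs

lemma azimuthalProfile_root (hc : 0 < c)
    (h : (c + 1) * Real.sin α * Real.cos (((L : ℝ) + 1) * α)
      + (c - 1) * Real.cos α * Real.sin (((L : ℝ) + 1) * α) = 0) :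
    (c + 1) * azimuthalProfile c α L 1 = 2 * √c * Real.cos α * azimuthalProfile c α L 0 := by
  have hs : √c * √c = c := Real.mul_self_sqrt hc.le
  have hsucc := rpow_neg_add_one_half_mul_sqrt hc 0
  simp only [azimuthalProfile, Nat.cast_one, Nat.cast_zero, neg_zero, zero_div,
    Real.rpow_zero, sub_zero, one_mul] at hsucc ⊢
  rw [zero_add] at hsucc
  rw [show ((L : ℝ) + 1 - 1) * α = ((L : ℝ) + 1) * α - α by ring, Real.sin_sub]
  linear_combination (-c ^ (-(1 : ℝ) / 2)) * h
    - c ^ (-(1 : ℝ) / 2) * (2 * Real.sin (((L : ℝ) + 1) * α) * Real.cos α) * hs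
    + √c * (2 * Real.sin (((L : ℝ) + 1) * α) * Real.cos α) * hsucc

end AzimuthalProfile

/-- For `d ≥ 3`, `L ≥ 0` and `α ∈ (0, π)` satisfying the eigenvalue
condition `d·sin α·cos((L+1)α) + (d−2)·cos α·sin((L+1)α) = 0`, the azimuthally
symmetric vector `v(u) = (d−1)^{−n/2}·sin((L+1−n)·α)` (`n` the depth of `u`) on the
interior vertices is nonzero and satisfies `𝓛_D v = λ·v` with
`λ = 1 − (2/d)·√(d−1)·cos α`. -/
theorem azimuthal_dirichlet_eigenvector (d L : ℕ) (hd : 3 ≤ d) (α : ℝ)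
    (hα : α ∈ Set.Ioo 0 Real.pi)
    (hroot : (d : ℝ) * Real.sin α * Real.cos (((L : ℝ) + 1) * α)
        + ((d : ℝ) - 2) * Real.cos α * Real.sin (((L : ℝ) + 1) * α) = 0) :
    let v : Interior d (L + 1) → ℝ := fun u =>
      ((d : ℝ) - 1) ^ (-(u.1.depth : ℝ) / 2)
        * Real.sin (((L : ℝ) + 1 - (u.1.depth : ℝ)) * α)
    v ≠ 0 ∧ (dirichletLaplacian d L).mulVec v
        = (1 - (2 / (d : ℝ)) * Real.sqrt ((d : ℝ) - 1) * Real.cos α) • v := by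
  intro v
  have hc : (0 : ℝ) < d - 1 := by
    have : (3 : ℝ) ≤ d := by exact_mod_cast hd
    linarith
  have hv : v = fun u => azimuthalProfile ((d : ℝ) - 1) α L u.1.depth := rfl
  refine ⟨fun hv0 => ?_, ?_⟩
  · obtain ⟨u, hu⟩ := exists_depth_eq (R := L + 1) (by omega : 2 ≤ d) L.le_succ
    have hsin : Real.sin α ≠ 0 := (Real.sin_pos_of_pos_of_lt_pi hα.1 hα.2).ne'
    refine azimuthalProfile_last_ne_zero (L := L) hc hsin ?_
    simpa [hv, hu] using congrFun hv0 ⟨u, show u.depth < L + 1 by omega⟩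
  · have hroot' : ((d : ℝ) - 1 + 1) * azimuthalProfile ((d : ℝ) - 1) α L 1
        = 2 * √((d : ℝ) - 1) * Real.cos α * azimuthalProfile ((d : ℝ) - 1) α L 0 :=
      azimuthalProfile_root hc (by linear_combination hroot)
    rw [hv, dirichletLaplacian_mulVec_radial_eq_smul (by omega) _ _ azimuthalProfile_leaf
      (by simpa only [sub_add_cancel] using hroot')
      fun n hn _ => azimuthalProfile_recurrence hc hn]
    congr 1
    ring
end

section
/- For integers d ≥ 3 and L ≥ 0, let α_L denote the smallest solution in (0, π) of the equation d·sin α·cos((L+1)·α) + (d−2)·cos α·sin((L+1)·α) = 0. Then α_L → 0 as L → ∞, and consequently the corresponding eigenvalues 1 − (2/d)·√(d−1)·cos(α_L) converge to 1 − (2/d)·√(d−1) as L → ∞. -/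
/-!
At `α = π / (2N)` the secular function equals `(d - 2) cos α > 0`, and at `α = π / N` it equals
`-d sin α < 0` (here `N = L + 1`). By the intermediate value theorem it has a zero in between, so
`0 ≤ α_L ≤ π / (L + 1)`, which forces `α_L → 0`; the eigenvalue statement follows by continuity
of `cos`.
-/

open Real Filter Set

noncomputable section

def treeSecular (d N α : ℝ) : ℝ :=
  d * sin α * cos (N * α) + (d - 2) * cos α * sin (N * α)

theorem continuous_treeSecular (d N : ℝ) : Continuous (treeSecular d N) := by
  unfold treeSecular
  fun_prop

theorem treeSecular_pi_div_two_mul_pos {d N : ℝ} (hd : 2 < d) (hN : 1 < N) :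
    0 < treeSecular d N (π / (2 * N)) := by
  have hNα : N * (π / (2 * N)) = π / 2 := by field_simp
  have hcos : 0 < cos (π / (2 * N)) := by
    have hpos : 0 < π / (2 * N) := div_pos pi_pos (by linarith)
    apply cos_pos_of_mem_Ioo ⟨by linarith [pi_pos], ?_⟩
    rw [div_lt_div_iff_of_pos_left pi_pos (by positivity) two_pos]
    linarith
  rw [treeSecular, hNα, cos_pi_div_two, sin_pi_div_two]
  nlinarith

theorem treeSecular_pi_div_neg {d N : ℝ} (hd : 0 < d) (hN : 1 < N) :
    treeSecular d N (π / N) < 0 := by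
  have hNα : N * (π / N) = π := by field_simp
  have hsin : 0 < sin (π / N) :=
    sin_pos_of_pos_of_lt_pi (div_pos pi_pos (by linarith)) (div_lt_self pi_pos hN)
  rw [treeSecular, hNα, cos_pi, sin_pi]
  nlinarith

theorem exists_treeSecular_eq_zero {d N : ℝ} (hd : 2 < d) (hN : 1 < N) :
    ∃ α ∈ Ioo 0 π, α ≤ π / N ∧ treeSecular d N α = 0 := by
  have hN0 : 0 < N := by linarith
  have hlt : π / (2 * N) < π / N :=
    div_lt_div_of_pos_left pi_pos hN0 (by linarith)
  obtain ⟨α, hα, hzero⟩ := intermediate_value_Ioo' hlt.le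
    (continuous_treeSecular d N).continuousOn
    ⟨treeSecular_pi_div_neg (by linarith) hN, treeSecular_pi_div_two_mul_pos hd hN⟩
  exact ⟨α, ⟨(div_pos pi_pos (by positivity)).trans hα.1,
    hα.2.trans (div_lt_self pi_pos hN)⟩, hα.2.le, hzero⟩

theorem sInf_mem_Icc_of_mem {S : Set ℝ} (hS : S ⊆ Ici 0) {c : ℝ} (hc : c ∈ S) :
    sInf S ∈ Icc 0 c :=
  ⟨le_csInf ⟨c, hc⟩ hS, csInf_le ⟨0, hS⟩ hc⟩

theorem sInf_treeSecular_zeros_mem_Icc {d N : ℝ} (hd : 2 < d) (hN : 1 < N) :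
    sInf {α | α ∈ Ioo 0 π ∧ treeSecular d N α = 0} ∈ Icc 0 (π / N) := by
  obtain ⟨α, hα, hle, hzero⟩ := exists_treeSecular_eq_zero hd hN
  have hmem := sInf_mem_Icc_of_mem (S := {α | α ∈ Ioo 0 π ∧ treeSecular d N α = 0})
    (fun _ hx => le_of_lt hx.1.1) ⟨hα, hzero⟩
  exact ⟨hmem.1, hmem.2.trans hle⟩

end

/-- For integers `d ≥ 3` and `L ≥ 0`, let `α_L` be the smallest
solution in `(0, π)` of `d·sin α·cos((L+1)α) + (d−2)·cos α·sin((L+1)α) = 0`.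
Then `α_L → 0` as `L → ∞`, and the corresponding eigenvalues
`1 − (2/d)·√(d−1)·cos α_L` converge to `1 − (2/d)·√(d−1)`. -/
theorem smallest_solution_tendsto_zero (d : ℕ) (hd : 3 ≤ d) :
    let αL : ℕ → ℝ := fun L =>
      sInf {α : ℝ | α ∈ Set.Ioo 0 Real.pi ∧
        (d : ℝ) * Real.sin α * Real.cos (((L : ℝ) + 1) * α)
          + ((d : ℝ) - 2) * Real.cos α * Real.sin (((L : ℝ) + 1) * α) = 0}
    Filter.Tendsto αL Filter.atTop (nhds 0) ∧
    Filter.Tendsto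
      (fun L : ℕ => 1 - (2 / (d : ℝ)) * Real.sqrt ((d : ℝ) - 1) * Real.cos (αL L))
      Filter.atTop
      (nhds (1 - (2 / (d : ℝ)) * Real.sqrt ((d : ℝ) - 1))) := by
  intro αL
  have hd2 : (2 : ℝ) < d := by exact_mod_cast hd
  have hbounds : ∀ᶠ L : ℕ in atTop, αL L ∈ Icc 0 (π / ((L : ℝ) + 1)) := by
    filter_upwards [eventually_gt_atTop 0] with L hL
    exact sInf_treeSecular_zeros_mem_Icc hd2 (by simpa using hL)
  have hupper : Tendsto (fun L : ℕ => π / ((L : ℝ) + 1)) atTop (nhds 0) :=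
    tendsto_const_nhds.div_atTop (tendsto_atTop_add_const_right _ 1 tendsto_natCast_atTop_atTop)
  have hα : Tendsto αL atTop (nhds 0) :=
    tendsto_of_tendsto_of_tendsto_of_le_of_le' tendsto_const_nhds hupper
      (hbounds.mono fun _ h => h.1) (hbounds.mono fun _ h => h.2)
  refine ⟨hα, ?_⟩
  have hcont : Continuous fun x : ℝ => 1 - 2 / (d : ℝ) * √((d : ℝ) - 1) * cos x := by fun_prop
  have hlim := (hcont.tendsto 0).comp hα
  rwa [cos_zero, mul_one] at hlim
end
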